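/- If a monoid morphism φ: (Σ₂⊥)* → M recognizes a relation R viewed as a language over Σ₂⊥, then the induced synchronous algebra morphism φ̂: Sync(Σ) → ↑M recognizes R. -/

import Mathlib

/-- The paired alphabet `Σ₂⊥ = (Σ×Σ) ⊕ (Σ×{⊥}) ⊕ ({⊥}×Σ)`. -/
def PL (α : Type) : Type := (α × α) ⊕ α ⊕ α

/-- Well-formed words over `Σ₂⊥`. -/
def WF {α : Type} (l : List (PL α)) : Prop :=
  ∃ (w : List (α × α)) (s : List α),
    l = w.map Sum.inl ++ s.map (fun a => Sum.inr (Sum.inl a)) ∨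
    l = w.map Sum.inl ++ s.map (fun a => Sum.inr (Sum.inr a))

/-- Decode a word over `Σ₂⊥` into the pair of words it represents. -/
def decodeW {α : Type} (l : List (PL α)) : List α × List α :=
  (l.filterMap (fun x => match x with
      | Sum.inl p => some p.1
      | Sum.inr (Sum.inl a) => some a
      | Sum.inr (Sum.inr _) => none),
   l.filterMap (fun x => match x with
      | Sum.inl p => some p.2
      | Sum.inr (Sum.inl _) => none
      | Sum.inr (Sum.inr a) => some a))

/-- The five types of synchronous words. -/
inductive STy | ll | lllb | lb | llbl | bl
deriving DecidableEq

/-- Synchronous words over `α`, organized by their five types. -/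
inductive SyncW (α : Type) : Type
  | wll : List (α × α) → SyncW α
  | wlllb : List (α × α) → List α → SyncW α
  | wlb : List α → SyncW α
  | wllbl : List (α × α) → List α → SyncW α
  | wbl : List α → SyncW α

namespace SyncW

variable {α : Type}

/-- The type of a synchronous word. -/
def ty : SyncW α → STy
  | wll _ => .ll | wlllb _ _ => .lllb | wlb _ => .lb | wllbl _ _ => .llbl | wbl _ => .bl

/-- Decoding into the represented pair of words. -/
def decode : SyncW α → List α × List α
  | wll w => (w.map Prod.fst, w.map Prod.snd)
  | wlllb w s => (w.map Prod.fst ++ s, w.map Prod.snd)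
  | wlb s => (s, [])
  | wllbl w s => (w.map Prod.fst, w.map Prod.snd ++ s)
  | wbl s => ([], s)

/-- Encoding a synchronous word as a word over `Σ₂⊥`. -/
def encode : SyncW α → List (PL α)
  | wll w => w.map Sum.inl
  | wlllb w s => w.map Sum.inl ++ s.map (fun a => Sum.inr (Sum.inl a))
  | wlb s => s.map (fun a => Sum.inr (Sum.inl a))
  | wllbl w s => w.map Sum.inl ++ s.map (fun a => Sum.inr (Sum.inr a))
  | wbl s => s.map (fun a => Sum.inr (Sum.inr a))

end SyncW

/-- The closed subset of `Sync(α)` induced by a relation. -/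
def projS {α : Type} (R : Set (List α × List α)) : Set (SyncW α) :=
  { x | x.decode ∈ R }

/-! Every synchronous word `x` is encoded as a well-formed word over `Σ₂⊥` that decodes back to
`x.decode`, so `x ∈ projS R` is exactly the recognition hypothesis at `x.encode`; the type
component of `φ̂` is unconstrained by `Acc × T`. -/

section decodeW

variable {α : Type}

theorem decodeW_append (l₁ l₂ : List (PL α)) :
    decodeW (l₁ ++ l₂) =
      ((decodeW l₁).1 ++ (decodeW l₂).1, (decodeW l₁).2 ++ (decodeW l₂).2) := by
  simp only [decodeW, List.filterMap_append]

/- `PL` is not reducible, so `List.map_cons` does not fire on these lists;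
the head is split off with `decodeW_append` instead. -/
theorem decodeW_map_inl (w : List (α × α)) :
    decodeW (w.map Sum.inl) = (w.map Prod.fst, w.map Prod.snd) := by
  induction w with
  | nil => rfl
  | cons p w ih => exact (decodeW_append [.inl p] _).trans (by rw [ih]; rfl)

theorem decodeW_map_left (s : List α) :
    decodeW (s.map fun a => (Sum.inr (Sum.inl a) : PL α)) = (s, []) := by
  induction s with
  | nil => rfl
  | cons a s ih => exact (decodeW_append [.inr _] _).trans (by rw [ih]; rfl)

theorem decodeW_map_right (s : List α) :
    decodeW (s.map fun a => (Sum.inr (Sum.inr a) : PL α)) = ([], s) := by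
  induction s with
  | nil => rfl
  | cons a s ih => exact (decodeW_append [.inr _] _).trans (by rw [ih]; rfl)

end decodeW

namespace SyncW

variable {α : Type}

theorem wf_encode : ∀ x : SyncW α, WF x.encode
  | wll w => ⟨w, [], .inl (List.append_nil _).symm⟩
  | wlllb w s => ⟨w, s, .inl rfl⟩
  | wlb s => ⟨[], s, .inl rfl⟩
  | wllbl w s => ⟨w, s, .inr rfl⟩
  | wbl s => ⟨[], s, .inr rfl⟩

theorem decodeW_encode : ∀ x : SyncW α, decodeW x.encode = x.decode
  | wll w => decodeW_map_inl w
  | wlllb w s => (decodeW_append (w.map Sum.inl) (s.map fun a => Sum.inr (Sum.inl a))).trans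
    (by rw [decodeW_map_inl, decodeW_map_left]; simp [decode])
  | wlb s => decodeW_map_left s
  | wllbl w s => (decodeW_append (w.map Sum.inl) (s.map fun a => Sum.inr (Sum.inr a))).trans
    (by rw [decodeW_map_inl, decodeW_map_right]; simp [decode])
  | wbl s => decodeW_map_right s

end SyncW

/-- If a monoid morphism `φ : (Σ₂⊥)* → M` recognizes the
relation `R` viewed as a language over `Σ₂⊥` (via `Acc ⊆ M`), then the induced
synchronous algebra morphism `φ̂ : Sync(Σ) → ↑M`, `x ↦ (φ(encode x), ty x)`,
recognizes `R` via the closed subset `Acc' = Acc × T` of the induced algebra. -/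
theorem induced_morphism_recognizes (α : Type) (M : Type) [Monoid M]
    (φ : FreeMonoid (PL α) →* M) (Acc : Set M) (R : Set (List α × List α))
    (hrec : ∀ l : List (PL α), WF l →
      (decodeW l ∈ R ↔ φ (FreeMonoid.ofList l) ∈ Acc)) :
    projS R =
      (fun x : SyncW α => (φ (FreeMonoid.ofList x.encode), x.ty))
        ⁻¹' (Acc ×ˢ (Set.univ : Set STy)) := by
  ext x
  simpa [projS, x.decodeW_encode] using hrec x.encode x.wf_encode
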